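/- Let Ω ⊂ ℝ^d be bounded measurable and (vₙ) ⊂ L¹(Ω) a sequence of nonnegative functions with biting limit v ∈ L¹(Ω) (i.e. there are measurable sets E_j ⊆ Ω, nonincreasing, |E_j| → 0, with vₙ ⇀ v weakly in L¹(Ω∖E_j) for each j). If ∫_Ω (vₙ − v) dx → 0, then vₙ ⇀ v weakly in L¹(Ω). -/

import Mathlib

open MeasureTheory Filter Topology

/-! Split `Ω = (Ω \ E_j) ∪ E_j`. On `Ω \ E_j` the biting convergence applies directly. On `E_j`
both integrals against `φ` are bounded by `‖φ‖_∞` times the masses `∫_{E_j} vₙ` and `∫_{E_j} |v|`.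
The first is where nonnegativity and the convergence of the total integrals enter: testing the
biting convergence with `φ = 1` and subtracting from `∫_Ω vₙ → ∫_Ω v` gives
`∫_{E_j} vₙ → ∫_{E_j} v`. By absolute continuity of the integral of `v`, the limits as `n → ∞`
of both masses tend to `0` as `j → ∞`. -/

theorem tendsto_zero_of_abs_le_of_tendsto_bounds {ι κ : Type*} {l : Filter ι} {l' : Filter κ}
    [l'.NeBot] {x : ι → ℝ} {g : κ → ι → ℝ} {b : κ → ℝ} (hx : ∀ j n, |x n| ≤ g j n)
    (hg : ∀ j, Tendsto (g j) l (𝓝 (b j))) (hb : Tendsto b l' (𝓝 0)) :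
    Tendsto x l (𝓝 0) := by
  rw [Metric.tendsto_nhds]
  intro ε hε
  obtain ⟨j, hj⟩ := (hb.eventually (Iio_mem_nhds hε)).exists
  filter_upwards [(hg j).eventually (Iio_mem_nhds hj)] with n hn
  simpa only [Real.dist_eq, sub_zero] using (hx j n).trans_lt hn

section SetIntegral

variable {α : Type*} [MeasurableSpace α] {μ : Measure α} {Ω E : Set α}

theorem tendsto_setIntegral_nhds_zero_of_subset {ι : Type*} {l : Filter ι} {f : α → ℝ}
    (hf : IntegrableOn f Ω μ) {E : ι → Set α} (hEm : ∀ j, MeasurableSet (E j))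
    (hEΩ : ∀ j, E j ⊆ Ω) (hEμ : Tendsto (μ ∘ E) l (𝓝 0)) :
    Tendsto (fun j => ∫ x in E j, f x ∂μ) l (𝓝 0) := by
  have hrestrict : ∀ j, ∫ x in E j, f x ∂(μ.restrict Ω) = ∫ x in E j, f x ∂μ := fun j => by
    rw [Measure.restrict_restrict (hEm j), Set.inter_eq_self_of_subset_left (hEΩ j)]
  refine (hf.tendsto_setIntegral_nhds_zero ?_).congr hrestrict
  exact tendsto_of_tendsto_of_tendsto_of_le_of_le tendsto_const_nhds hEμ (fun _ => zero_le)
    fun j => Measure.restrict_apply_le _ _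

theorem tendsto_setIntegral_of_tendsto_setIntegral_sdiff {ι : Type*} {l : Filter ι}
    {f : ι → α → ℝ} {g : α → ℝ} (hf : ∀ n, IntegrableOn (f n) Ω μ) (hg : IntegrableOn g Ω μ)
    (hE : MeasurableSet E) (hEΩ : E ⊆ Ω)
    (hΩ : Tendsto (fun n => ∫ x in Ω, f n x ∂μ) l (𝓝 (∫ x in Ω, g x ∂μ)))
    (hsdiff : Tendsto (fun n => ∫ x in Ω \ E, f n x ∂μ) l (𝓝 (∫ x in Ω \ E, g x ∂μ))) :
    Tendsto (fun n => ∫ x in E, f n x ∂μ) l (𝓝 (∫ x in E, g x ∂μ)) := by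
  have hsplit : ∀ h : α → ℝ, IntegrableOn h Ω μ →
      ∫ x in E, h x ∂μ = ∫ x in Ω, h x ∂μ - ∫ x in Ω \ E, h x ∂μ := fun h hh => by
    rw [setIntegral_sdiff hE hh hEΩ, sub_sub_cancel]
  rw [hsplit g hg]
  exact (hΩ.sub hsdiff).congr fun n => (hsplit (f n) (hf n)).symm

theorem abs_setIntegral_mul_le {f φ : α → ℝ} {C : ℝ} (hf : IntegrableOn f E μ)
    (hC : ∀ x, |φ x| ≤ C) :
    |∫ x in E, f x * φ x ∂μ| ≤ C * ∫ x in E, |f x| ∂μ := by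
  refine (norm_integral_le_of_norm_le (f := fun x => f x * φ x) (hf.abs.const_mul C)
    (ae_of_all _ fun x => ?_)).trans_eq
    (integral_const_mul C _)
  rw [Real.norm_eq_abs, abs_mul, mul_comm C]
  exact mul_le_mul_of_nonneg_left (hC x) (abs_nonneg _)

theorem abs_setIntegral_mul_sub_le {f g φ : α → ℝ} {C : ℝ} (hf : IntegrableOn f Ω μ)
    (hg : IntegrableOn g Ω μ) (hφ : AEStronglyMeasurable φ μ) (hC : ∀ x, |φ x| ≤ C)
    (hE : MeasurableSet E) (hEΩ : E ⊆ Ω) :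
    |∫ x in Ω, f x * φ x ∂μ - ∫ x in Ω, g x * φ x ∂μ| ≤
      |∫ x in Ω \ E, f x * φ x ∂μ - ∫ x in Ω \ E, g x * φ x ∂μ| +
        C * (∫ x in E, |f x| ∂μ + ∫ x in E, |g x| ∂μ) := by
  have hmul : ∀ h : α → ℝ, IntegrableOn h Ω μ → IntegrableOn (fun x => h x * φ x) Ω μ :=
    fun h hh => hh.mul_bdd hφ.restrict (ae_of_all _ hC)
  have hfE := abs_setIntegral_mul_le (hf.mono_set hEΩ) hC
  have hgE := abs_setIntegral_mul_le (hg.mono_set hEΩ) hC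
  calc _ = |(∫ x in Ω \ E, f x * φ x ∂μ - ∫ x in Ω \ E, g x * φ x ∂μ) +
          ∫ x in E, f x * φ x ∂μ + -∫ x in E, g x * φ x ∂μ| := by
        rw [setIntegral_sdiff hE (hmul f hf) hEΩ, setIntegral_sdiff hE (hmul g hg) hEΩ]
        congr 1
        ring
    _ ≤ _ := (abs_add_three _ _ _).trans (by rw [abs_neg]; linarith)

end SetIntegral

theorem biting_to_weak_L1_general (d : ℕ) (Ω : Set (Fin d → ℝ))
    (v : ℕ → (Fin d → ℝ) → ℝ) (vl : (Fin d → ℝ) → ℝ)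
    (hvint : ∀ n, IntegrableOn (v n) Ω) (hvlint : IntegrableOn vl Ω)
    (hnn : ∀ n x, 0 ≤ v n x)
    (E : ℕ → Set (Fin d → ℝ)) (hEm : ∀ j, MeasurableSet (E j)) (hEsub : ∀ j, E j ⊆ Ω)
    (hEvol : Tendsto (fun j => volume (E j)) atTop (𝓝 0))
    (hbite : ∀ j, ∀ φ : (Fin d → ℝ) → ℝ, Measurable φ → (∃ C, ∀ x, |φ x| ≤ C) →
        Tendsto (fun n => ∫ x in Ω \ E j, v n x * φ x) atTop
          (𝓝 (∫ x in Ω \ E j, vl x * φ x)))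
    (hint : Tendsto (fun n => ∫ x in Ω, (v n x - vl x)) atTop (𝓝 0)) :
    ∀ φ : (Fin d → ℝ) → ℝ, Measurable φ → (∃ C, ∀ x, |φ x| ≤ C) →
      Tendsto (fun n => ∫ x in Ω, v n x * φ x) atTop (𝓝 (∫ x in Ω, vl x * φ x)) := by
  intro φ hφ ⟨C, hC⟩
  have hmass : Tendsto (fun n => ∫ x in Ω, v n x) atTop (𝓝 (∫ x in Ω, vl x)) := by
    simpa [integral_sub (hvint _) hvlint] using hint.add_const (∫ x in Ω, vl x)
  have hmassE : ∀ j, Tendsto (fun n => ∫ x in E j, v n x) atTop (𝓝 (∫ x in E j, vl x)) :=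
    fun j => tendsto_setIntegral_of_tendsto_setIntegral_sdiff hvint hvlint (hEm j) (hEsub j)
      hmass (by simpa using hbite j 1 measurable_const ⟨1, fun _ => by simp⟩)
  have hsmall : ∀ f : (Fin d → ℝ) → ℝ, IntegrableOn f Ω →
      Tendsto (fun j => ∫ x in E j, f x) atTop (𝓝 0) :=
    fun f hf => tendsto_setIntegral_nhds_zero_of_subset hf hEm hEsub hEvol
  rw [← tendsto_sub_nhds_zero_iff]
  refine tendsto_zero_of_abs_le_of_tendsto_bounds
    (b := fun j => C * ((∫ x in E j, vl x) + ∫ x in E j, |vl x|))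
    (fun j n => abs_setIntegral_mul_sub_le (hvint n) hvlint hφ.aestronglyMeasurable hC (hEm j)
      (hEsub j)) (fun j => ?_)
    (by simpa using ((hsmall vl hvlint).add (hsmall _ hvlint.abs)).const_mul C)
  simp only [abs_of_nonneg (hnn _ _)]
  simpa using (((hbite j φ hφ ⟨C, hC⟩).sub_const (∫ x in Ω \ E j, vl x * φ x)).abs.add
    (((hmassE j).add_const (∫ x in E j, |vl x|)).const_mul C))

/-- Biting-limit upgrade (Gwiazda–Málek–Świerczewska): if nonnegative `vₙ` converge to `v`
weakly in `L¹(Ω∖E_j)` for sets `E_j` with `|E_j| → 0`, and `∫_Ω (vₙ − v) → 0`, then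
`vₙ ⇀ v` weakly in `L¹(Ω)`. -/
theorem biting_to_weak_L1 (d : ℕ) (Ω : Set (Fin d → ℝ))
    (hΩm : MeasurableSet Ω) (hΩb : Bornology.IsBounded Ω)
    (v : ℕ → (Fin d → ℝ) → ℝ) (vl : (Fin d → ℝ) → ℝ)
    (hvint : ∀ n, IntegrableOn (v n) Ω) (hvlint : IntegrableOn vl Ω)
    (hnn : ∀ n x, 0 ≤ v n x)
    (E : ℕ → Set (Fin d → ℝ)) (hEm : ∀ j, MeasurableSet (E j)) (hEsub : ∀ j, E j ⊆ Ω)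
    (hEanti : Antitone E)
    (hEvol : Tendsto (fun j => volume (E j)) atTop (𝓝 0))
    (hbite : ∀ j, ∀ φ : (Fin d → ℝ) → ℝ, Measurable φ → (∃ C, ∀ x, |φ x| ≤ C) →
        Tendsto (fun n => ∫ x in Ω \ E j, v n x * φ x) atTop
          (𝓝 (∫ x in Ω \ E j, vl x * φ x)))
    (hint : Tendsto (fun n => ∫ x in Ω, (v n x - vl x)) atTop (𝓝 0)) :
    ∀ φ : (Fin d → ℝ) → ℝ, Measurable φ → (∃ C, ∀ x, |φ x| ≤ C) →
      Tendsto (fun n => ∫ x in Ω, v n x * φ x) atTop (𝓝 (∫ x in Ω, vl x * φ x)) :=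
  biting_to_weak_L1_general d Ω v vl hvint hvlint hnn E hEm hEsub hEvol hbite hint
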